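/- arXiv:1405.1594 — 4 statements merged into one kernel-verified Lean document; each statement's English description precedes it below -/
import Mathlib

section
/- For the function E(u) = (1/p)‖Au − b‖_p^p + λ(‖∇₁u‖₀ + ‖∇₂u‖₀) on ℝ^{dn}, with p ≥ 1 and λ > 0, the asymptotic (recession) function E_∞(u) = liminf_{u'→u, t→∞} E(tu')/t equals 0 if u ∈ ker(A), equals +∞ if u ∉ ker(A) and p > 1, and equals ‖Au‖₁ if u ∉ ker(A) and p = 1. -/
open Filter Topology

/-- Grouped ℓ⁰ semi-norm: number of grid points where the d-dimensional group is nonzero. -/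
noncomputable def l0 {n d : ℕ} (u : Fin n → Fin d → ℝ) : ℝ :=
  Set.ncard {i : Fin n | u i ≠ 0}

/-- The Potts-regularized functional E(u) = (1/p)‖Au − b‖_p^p + λ(‖∇₁u‖₀ + ‖∇₂u‖₀). -/
noncomputable def pottsE {ng d m : ℕ}
    (A : (Fin ng → Fin d → ℝ) →ₗ[ℝ] (Fin m → ℝ)) (b : Fin m → ℝ)
    (D1 D2 : (Fin ng → Fin d → ℝ) →ₗ[ℝ] (Fin ng → Fin d → ℝ))
    (p lam : ℝ) (u : Fin ng → Fin d → ℝ) : ℝ :=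
  (1 / p) * ∑ i, |A u i - b i| ^ p + lam * (l0 (D1 u) + l0 (D2 u))

/-- Asymptotic (recession) function: E_∞(u) = liminf_{u'→u, t→∞} E(tu')/t. -/
noncomputable def pottsEinf {ng d m : ℕ}
    (A : (Fin ng → Fin d → ℝ) →ₗ[ℝ] (Fin m → ℝ)) (b : Fin m → ℝ)
    (D1 D2 : (Fin ng → Fin d → ℝ) →ₗ[ℝ] (Fin ng → Fin d → ℝ))
    (p lam : ℝ) (u : Fin ng → Fin d → ℝ) : EReal :=
  Filter.liminf
    (fun x : (Fin ng → Fin d → ℝ) × ℝ =>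
      ((pottsE A b D1 D2 p lam (x.2 • x.1) / x.2 : ℝ) : EReal))
    ((nhds u) ×ˢ atTop)

/-! For `t > 0` the ℓ⁰ terms are invariant under `v ↦ t v`, so
`E(t v) / t = t ^ (p - 1) · (1/p) ‖A v - b / t‖_p ^ p + λ (‖∇₁ v‖₀ + ‖∇₂ v‖₀) / t`.
As `(v, t) → (u, ∞)` the second summand tends to `0` and `(1/p) ‖A v - b / t‖_p ^ p` to
`(1/p) ‖A u‖_p ^ p`, which gives the lower bounds; evaluating along `v = u` gives the matching
upper bounds. On `ker A` simply `E(t u) = E(u)`. -/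

theorem Filter.liminf_prod_le_of_tendsto {X β γ : Type*} [TopologicalSpace X]
    [CompleteLinearOrder γ] [TopologicalSpace γ] [OrderTopology γ] {l : Filter β} [l.NeBot]
    {f : X × β → γ} {x : X} {c : γ} (h : Tendsto (fun y => f (x, y)) l (𝓝 c)) :
    liminf f (𝓝 x ×ˢ l) ≤ c :=
  calc liminf f (𝓝 x ×ˢ l) ≤ liminf f (pure x ×ˢ l) :=
        liminf_le_liminf_of_le (prod_mono (pure_le_nhds x) le_rfl)
    _ = c := by rw [pure_prod, ← liminf_comp]; exact h.liminf_eq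

theorem eventually_snd_pos {X : Type*} [TopologicalSpace X] (u : X) :
    ∀ᶠ x : X × ℝ in 𝓝 u ×ˢ atTop, 0 < x.2 :=
  (eventually_gt_atTop 0).prod_inr _

theorem l0_nonneg {n d : ℕ} (u : Fin n → Fin d → ℝ) : 0 ≤ l0 u := Nat.cast_nonneg _

theorem l0_smul {n d : ℕ} {t : ℝ} (ht : t ≠ 0) (u : Fin n → Fin d → ℝ) :
    l0 (t • u) = l0 u := by
  simp only [l0, Pi.smul_apply, ne_eq, smul_eq_zero, ht, false_or]

section pottsE

variable {ng d m : ℕ} (A : (Fin ng → Fin d → ℝ) →ₗ[ℝ] (Fin m → ℝ)) (b : Fin m → ℝ)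
  (D1 D2 : (Fin ng → Fin d → ℝ) →ₗ[ℝ] (Fin ng → Fin d → ℝ)) {p lam : ℝ}

theorem pottsE_nonneg (hp : 0 ≤ p) (hlam : 0 ≤ lam) (v : Fin ng → Fin d → ℝ) :
    0 ≤ pottsE A b D1 D2 p lam v := by
  have := l0_nonneg (D1 v)
  have := l0_nonneg (D2 v)
  unfold pottsE
  positivity

theorem pottsE_smul {t : ℝ} (ht : t ≠ 0) (v : Fin ng → Fin d → ℝ) :
    pottsE A b D1 D2 p lam (t • v)
      = (1 / p) * ∑ i, |t * A v i - b i| ^ p + lam * (l0 (D1 v) + l0 (D2 v)) := by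
  simp only [pottsE, map_smul, l0_smul ht, Pi.smul_apply, smul_eq_mul]

theorem pottsE_smul_of_map_eq_zero {u : Fin ng → Fin d → ℝ} (hu : A u = 0) {t : ℝ} (ht : t ≠ 0) :
    pottsE A b D1 D2 p lam (t • u) = pottsE A b D1 D2 p lam u := by
  rw [pottsE_smul A b D1 D2 ht]
  simp [pottsE, hu]

theorem pottsE_smul_div {t : ℝ} (ht : 0 < t) (v : Fin ng → Fin d → ℝ) :
    pottsE A b D1 D2 p lam (t • v) / t
      = t ^ (p - 1) * ((1 / p) * ∑ i, |A v i - b i / t| ^ p)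
        + lam * (l0 (D1 v) + l0 (D2 v)) / t := by
  have hscale : ∀ i, |t * A v i - b i| ^ p = t ^ p * |A v i - b i / t| ^ p := fun i => by
    rw [← Real.mul_rpow ht.le (abs_nonneg _), ← abs_of_pos ht, ← abs_mul, abs_of_pos ht,
      mul_sub, mul_div_cancel₀ _ ht.ne']
  rw [pottsE_smul A b D1 D2 ht.ne', Real.rpow_sub_one ht.ne',
    Finset.sum_congr rfl fun i _ => hscale i, ← Finset.mul_sum]
  ring

theorem rpow_mul_fidelity_le_pottsE_smul_div (hlam : 0 ≤ lam) {t : ℝ} (ht : 0 < t)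
    (v : Fin ng → Fin d → ℝ) :
    t ^ (p - 1) * ((1 / p) * ∑ i, |A v i - b i / t| ^ p)
      ≤ pottsE A b D1 D2 p lam (t • v) / t := by
  rw [pottsE_smul_div A b D1 D2 ht]
  have := l0_nonneg (D1 v)
  have := l0_nonneg (D2 v)
  have : 0 ≤ lam * (l0 (D1 v) + l0 (D2 v)) / t := by positivity
  linarith

theorem tendsto_fidelity (hp : 0 ≤ p) (u : Fin ng → Fin d → ℝ) :
    Tendsto (fun x : (Fin ng → Fin d → ℝ) × ℝ => (1 / p) * ∑ i, |A x.1 i - b i / x.2| ^ p)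
      (𝓝 u ×ˢ atTop) (𝓝 ((1 / p) * ∑ i, |A u i| ^ p)) := by
  have hA : Tendsto (fun x : (Fin ng → Fin d → ℝ) × ℝ => A x.1) (𝓝 u ×ˢ atTop) (𝓝 (A u)) :=
    (A.continuous_of_finiteDimensional.tendsto u).comp tendsto_fst
  refine tendsto_const_nhds.mul (tendsto_finsetSum _ fun i _ => ?_)
  have hb : Tendsto (fun x : (Fin ng → Fin d → ℝ) × ℝ => b i / x.2) (𝓝 u ×ˢ atTop) (𝓝 0) :=
    tendsto_const_nhds.div_atTop tendsto_snd
  simpa using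
    (((continuous_apply i).continuousAt.tendsto.comp hA).sub hb).abs.rpow_const (Or.inr hp)

theorem le_pottsEinf_of_tendsto {u : Fin ng → Fin d → ℝ} {g : (Fin ng → Fin d → ℝ) × ℝ → ℝ}
    {c : ℝ} (hg : Tendsto g (𝓝 u ×ˢ atTop) (𝓝 c))
    (hle : ∀ᶠ x in 𝓝 u ×ˢ atTop, g x ≤ pottsE A b D1 D2 p lam (x.2 • x.1) / x.2) :
    (c : EReal) ≤ pottsEinf A b D1 D2 p lam u :=
  calc (c : EReal) = liminf (fun x => (g x : EReal)) (𝓝 u ×ˢ atTop) :=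
        ((continuous_coe_real_ereal.tendsto c).comp hg).liminf_eq.symm
    _ ≤ _ := liminf_le_liminf (hle.mono fun _ hx => EReal.coe_le_coe_iff.2 hx)

theorem pottsEinf_le_of_tendsto {u : Fin ng → Fin d → ℝ} {c : ℝ}
    (h : Tendsto (fun t => pottsE A b D1 D2 p lam (t • u) / t) atTop (𝓝 c)) :
    pottsEinf A b D1 D2 p lam u ≤ c :=
  liminf_prod_le_of_tendsto ((continuous_coe_real_ereal.tendsto c).comp h)

theorem pottsEinf_eq_zero (hp : 0 ≤ p) (hlam : 0 ≤ lam) {u : Fin ng → Fin d → ℝ} (hu : A u = 0) :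
    pottsEinf A b D1 D2 p lam u = 0 := by
  have hslice : Tendsto (fun t => pottsE A b D1 D2 p lam (t • u) / t) atTop (𝓝 0) :=
    (tendsto_const_nhds (x := pottsE A b D1 D2 p lam u)).div_atTop tendsto_id |>.congr' <|
      (eventually_ne_atTop 0).mono fun t ht => by
        simp only [id, pottsE_smul_of_map_eq_zero A b D1 D2 hu ht]
  have hnonneg : ∀ᶠ x in 𝓝 u ×ˢ atTop, (0 : ℝ) ≤ pottsE A b D1 D2 p lam (x.2 • x.1) / x.2 :=
    (eventually_snd_pos u).mono fun x hx => div_nonneg (pottsE_nonneg A b D1 D2 hp hlam _) hx.le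
  exact le_antisymm (by simpa using pottsEinf_le_of_tendsto A b D1 D2 hslice)
    (by simpa using le_pottsEinf_of_tendsto A b D1 D2 tendsto_const_nhds hnonneg)

theorem pottsEinf_eq_top (hp : 1 < p) (hlam : 0 ≤ lam) {u : Fin ng → Fin d → ℝ} (hu : A u ≠ 0) :
    pottsEinf A b D1 D2 p lam u = ⊤ := by
  obtain ⟨i, hi⟩ : ∃ i, A u i ≠ 0 := Function.ne_iff.1 hu
  have hpos : 0 < (1 / p) * ∑ i, |A u i| ^ p :=
    mul_pos (by positivity) <| Finset.sum_pos' (fun _ _ => by positivity)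
      ⟨i, Finset.mem_univ i, Real.rpow_pos_of_pos (abs_pos.2 hi) p⟩
  have hlow := ((tendsto_rpow_atTop (sub_pos.2 hp)).comp tendsto_snd).atTop_mul_pos hpos
    (tendsto_fidelity A b (by linarith) u)
  have hE : Tendsto (fun x : (Fin ng → Fin d → ℝ) × ℝ => pottsE A b D1 D2 p lam (x.2 • x.1) / x.2)
      (𝓝 u ×ˢ atTop) atTop :=
    tendsto_atTop_mono' _ ((eventually_snd_pos u).mono fun x hx =>
      rpow_mul_fidelity_le_pottsE_smul_div A b D1 D2 hlam hx x.1) hlow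
  exact (EReal.tendsto_coe_atTop.comp hE).liminf_eq

theorem pottsEinf_one (hlam : 0 ≤ lam) (u : Fin ng → Fin d → ℝ) :
    pottsEinf A b D1 D2 1 lam u = ((∑ i, |A u i| : ℝ) : EReal) := by
  have hfid : Tendsto (fun x : (Fin ng → Fin d → ℝ) × ℝ => ∑ i, |A x.1 i - b i / x.2|)
      (𝓝 u ×ˢ atTop) (𝓝 (∑ i, |A u i|)) := by
    simpa using tendsto_fidelity A b zero_le_one u
  have hslice : Tendsto (fun t => pottsE A b D1 D2 1 lam (t • u) / t) atTop
      (𝓝 (∑ i, |A u i|)) := by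
    have hfid_u : Tendsto (fun t : ℝ => ∑ i, |A u i - b i / t|) atTop (𝓝 (∑ i, |A u i|)) := by
      simpa [Function.comp_def] using hfid.comp (tendsto_const_nhds.prodMk tendsto_id)
    have hreg : Tendsto (fun t : ℝ => lam * (l0 (D1 u) + l0 (D2 u)) / t) atTop (𝓝 0) :=
      tendsto_const_nhds.div_atTop tendsto_id
    have hsum := hfid_u.add hreg
    rw [add_zero] at hsum
    refine hsum.congr' ((eventually_gt_atTop 0).mono fun t ht => ?_)
    simp [pottsE_smul_div A b D1 D2 ht]
  refine le_antisymm (pottsEinf_le_of_tendsto A b D1 D2 hslice)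
    (le_pottsEinf_of_tendsto A b D1 D2 hfid ((eventually_snd_pos u).mono fun x hx => ?_))
  simpa using rpow_mul_fidelity_le_pottsE_smul_div A b D1 D2 (p := 1) hlam hx x.1

end pottsE

theorem stmt0 {ng d m : ℕ}
    (A : (Fin ng → Fin d → ℝ) →ₗ[ℝ] (Fin m → ℝ)) (b : Fin m → ℝ)
    (D1 D2 : (Fin ng → Fin d → ℝ) →ₗ[ℝ] (Fin ng → Fin d → ℝ))
    (p lam : ℝ) (hp : 1 ≤ p) (hlam : 0 < lam) (u : Fin ng → Fin d → ℝ) :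
    (A u = 0 → pottsEinf A b D1 D2 p lam u = 0) ∧
    (A u ≠ 0 → 1 < p → pottsEinf A b D1 D2 p lam u = ⊤) ∧
    (A u ≠ 0 → p = 1 → pottsEinf A b D1 D2 p lam u = ((∑ i, |A u i| : ℝ) : EReal)) := by
  refine ⟨pottsEinf_eq_zero A b D1 D2 (by linarith) hlam.le,
    fun hu hp1 => pottsEinf_eq_top A b D1 D2 hp1 hlam.le hu, fun _ hp1 => ?_⟩
  subst hp1
  exact pottsEinf_one A b D1 D2 hlam.le u
end

section
/- The function E(u) = (1/p)‖Au − b‖_p^p + λ(‖∇₁u‖₀ + ‖∇₂u‖₀) on ℝ^{dn} is asymptotically level stable: for each ρ > 0, each bounded real sequence {λ_k}, and each sequence {u_k} with E(u_k) ≤ λ_k, ‖u_k‖ → ∞, and u_k/‖u_k‖ → ũ ∈ ker(E_∞), there exists k₀ such that E(u_k − ρũ) ≤ λ_k for all k ≥ k₀. -/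
/-!
Since `A ũ = 0`, the data term is unchanged by the shift `u_k ↦ u_k - ρ ũ`. For the jump terms,
`D u_k / ‖u_k‖ → D ũ` shows that eventually every grid point where `D ũ` is nonzero is already a
jump of `u_k`; there, the shift cannot create new jumps, so neither `ℓ⁰` count increases and
`E (u_k - ρ ũ) ≤ E u_k ≤ λ_k`.
-/

open Filter Topology

lemma eventually_ne_zero_of_tendsto_smul {ι R M : Type*} [Zero R] [Zero M] [SMulWithZero R M]
    [TopologicalSpace M] [T1Space M] {l : Filter ι} {c : ι → R} {x : ι → M} {v : M}
    (h : Tendsto (fun k => c k • x k) l (𝓝 v)) (hv : v ≠ 0) : ∀ᶠ k in l, x k ≠ 0 := by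
  filter_upwards [h.eventually_ne hv] with k hk hx
  exact hk (by rw [hx, smul_zero])

lemma eventually_forall_apply_ne_zero_of_tendsto_normalize {ι E : Type*}
    [NormedAddCommGroup E] [NormedSpace ℝ E] [FiniteDimensional ℝ E] {n d : ℕ}
    {l : Filter ι} (D : E →ₗ[ℝ] (Fin n → Fin d → ℝ)) {u : ι → E} {utld : E}
    (hdir : Tendsto (fun k => (‖u k‖)⁻¹ • u k) l (𝓝 utld)) :
    ∀ᶠ k in l, ∀ i, D utld i ≠ 0 → D (u k) i ≠ 0 := by
  rw [eventually_all]
  intro i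
  by_cases h0 : D utld i = 0
  · exact Eventually.of_forall fun _ h => absurd h0 h
  · have hDi : Continuous fun w => D w i :=
      (continuous_apply i).comp D.continuous_of_finiteDimensional
    have hlim : Tendsto (fun k => (‖u k‖)⁻¹ • D (u k) i) l (𝓝 (D utld i)) := by
      simpa only [Function.comp_def, map_smul, Pi.smul_apply] using
        (hDi.tendsto utld).comp hdir
    filter_upwards [eventually_ne_zero_of_tendsto_smul hlim h0] with k hk _ using hk

lemma l0_sub_smul_le {n d : ℕ} {x w : Fin n → Fin d → ℝ} (a : ℝ)
    (hsupp : ∀ i, w i ≠ 0 → x i ≠ 0) : l0 (x - a • w) ≤ l0 x := by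
  have hsub : {i | (x - a • w) i ≠ 0} ⊆ {i | x i ≠ 0} := by
    intro i hi
    by_cases hw : w i = 0
    · simpa [hw] using hi
    · exact hsupp i hw
  unfold l0
  exact_mod_cast Set.ncard_le_ncard hsub (Set.toFinite _)

lemma pottsE_sub_smul_le {ng d m : ℕ}
    (A : (Fin ng → Fin d → ℝ) →ₗ[ℝ] (Fin m → ℝ)) (b : Fin m → ℝ)
    (D1 D2 : (Fin ng → Fin d → ℝ) →ₗ[ℝ] (Fin ng → Fin d → ℝ))
    (p : ℝ) {lam : ℝ} (hlam : 0 ≤ lam) (ρ : ℝ) {v w : Fin ng → Fin d → ℝ}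
    (hker : A w = 0) (h1 : ∀ i, D1 w i ≠ 0 → D1 v i ≠ 0) (h2 : ∀ i, D2 w i ≠ 0 → D2 v i ≠ 0) :
    pottsE A b D1 D2 p lam (v - ρ • w) ≤ pottsE A b D1 D2 p lam v := by
  have hA : A (v - ρ • w) = A v := by rw [map_sub, map_smul, hker, smul_zero, sub_zero]
  have hl1 := l0_sub_smul_le ρ h1
  have hl2 := l0_sub_smul_le ρ h2
  rw [← map_smul, ← map_sub] at hl1 hl2
  unfold pottsE
  rw [hA]
  gcongr

theorem stmt4_general {ng d m : ℕ}
    (A : (Fin ng → Fin d → ℝ) →ₗ[ℝ] (Fin m → ℝ)) (b : Fin m → ℝ)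
    (D1 D2 : (Fin ng → Fin d → ℝ) →ₗ[ℝ] (Fin ng → Fin d → ℝ))
    (p lam : ℝ) (hlam : 0 < lam)
    (ρ : ℝ)
    (lamseq : ℕ → ℝ)
    (u : ℕ → (Fin ng → Fin d → ℝ)) (utld : Fin ng → Fin d → ℝ)
    (hlev : ∀ k, pottsE A b D1 D2 p lam (u k) ≤ lamseq k)
    (hdir : Tendsto (fun k => (‖u k‖)⁻¹ • u k) atTop (nhds utld))
    (hker : A utld = 0) :
    ∃ k₀ : ℕ, ∀ k ≥ k₀, pottsE A b D1 D2 p lam (u k - ρ • utld) ≤ lamseq k := by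
  have hsupp1 := eventually_forall_apply_ne_zero_of_tendsto_normalize D1 hdir
  have hsupp2 := eventually_forall_apply_ne_zero_of_tendsto_normalize D2 hdir
  rw [← eventually_atTop]
  filter_upwards [hsupp1, hsupp2] with k hk1 hk2
  exact (pottsE_sub_smul_le A b D1 D2 p hlam.le ρ hker hk1 hk2).trans (hlev k)

/-- E is asymptotically level stable (als). -/
theorem stmt4 {ng d m : ℕ}
    (A : (Fin ng → Fin d → ℝ) →ₗ[ℝ] (Fin m → ℝ)) (b : Fin m → ℝ)
    (D1 D2 : (Fin ng → Fin d → ℝ) →ₗ[ℝ] (Fin ng → Fin d → ℝ))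
    (p lam : ℝ) (hp : 1 ≤ p) (hlam : 0 < lam)
    (ρ : ℝ) (hρ : 0 < ρ)
    (lamseq : ℕ → ℝ) (hbdd : ∃ B : ℝ, ∀ k, |lamseq k| ≤ B)
    (u : ℕ → (Fin ng → Fin d → ℝ)) (utld : Fin ng → Fin d → ℝ)
    (hlev : ∀ k, pottsE A b D1 D2 p lam (u k) ≤ lamseq k)
    (hnorm : Tendsto (fun k => ‖u k‖) atTop atTop)
    (hdir : Tendsto (fun k => (‖u k‖)⁻¹ • u k) atTop (nhds utld))
    (hker : A utld = 0) :
    ∃ k₀ : ℕ, ∀ k ≥ k₀, pottsE A b D1 D2 p lam (u k - ρ • utld) ≤ lamseq k :=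
  stmt4_general A b D1 D2 p lam hlam ρ lamseq u utld hlev hdir hker
end

section
/- The (generally non-coercive, discontinuous) function E(u) = (1/p)‖Au − b‖_p^p + λ(‖∇₁u‖₀ + ‖∇₂u‖₀) on ℝ^{dn}, with p ≥ 1, λ > 0, attains a global minimum, i.e., there exists û ∈ ℝ^{dn} with E(û) ≤ E(u) for all u. -/
open Filter Topology

/-!
The penalty depends on `u` only through the supports of `∇₁u` and `∇₂u`, and there are finitely
many candidate pairs of supports `(S₁, S₂)`. The `u` with `supp ∇ⱼu ⊆ Sⱼ` form a subspace `V`;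
although `A` may have a kernel, the fidelity is a coercive continuous function of `Au` on the
closed subspace `A V`, so it attains its minimum on `V`. Since `λ > 0`, the penalty on `V` is at
most `λ (|S₁| + |S₂|)`, with equality at the exact supports of `u`, so the best of the finitely
many minimizers is a global one.
-/

open Finset

lemma Pi.norm_rpow_le_sum_abs_rpow {ι : Type*} [Fintype ι] (x : ι → ℝ) {p : ℝ} (hp : 0 < p) :
    ‖x‖ ^ p ≤ ∑ i, |x i| ^ p := by
  rcases isEmpty_or_nonempty ι with _ | _
  · simp [Subsingleton.elim x 0, Real.zero_rpow hp.ne']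
  obtain ⟨j, -, hj⟩ := exists_mem_eq_sup univ univ_nonempty fun i => ‖x i‖₊
  have hxj : ‖x‖ = |x j| := congrArg NNReal.toReal ((Pi.nnnorm_def x).trans hj)
  rw [hxj]
  exact single_le_sum (fun i _ => Real.rpow_nonneg (abs_nonneg (x i)) p) (mem_univ j)

lemma tendsto_sum_abs_sub_rpow_cocompact {ι : Type*} [Fintype ι] (b : ι → ℝ) {p : ℝ}
    (hp : 0 < p) :
    Tendsto (fun z : ι → ℝ => ∑ i, |z i - b i| ^ p) (cocompact (ι → ℝ)) atTop := by
  have hnorm : Tendsto (fun z : ι → ℝ => ‖z‖ - ‖b‖) (cocompact _) atTop :=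
    tendsto_atTop_add_const_right _ _ tendsto_norm_cocompact_atTop
  refine tendsto_atTop_mono (fun z => ?_) ((tendsto_rpow_atTop hp).comp
    (tendsto_atTop_mono (fun z => norm_sub_norm_le z b) hnorm))
  exact Pi.norm_rpow_le_sum_abs_rpow (z - b) hp

lemma Submodule.exists_mem_forall_le_comp {E F : Type*} [AddCommGroup E] [Module ℝ E]
    [NormedAddCommGroup F] [NormedSpace ℝ F] [FiniteDimensional ℝ F]
    (V : Submodule ℝ E) (A : E →ₗ[ℝ] F) {g : F → ℝ} (hg : Continuous g)
    (hg_coercive : Tendsto g (cocompact F) atTop) :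
    ∃ u ∈ V, ∀ v ∈ V, g (A u) ≤ g (A v) := by
  obtain ⟨y, ⟨u, hu, rfl⟩, hmin⟩ := hg.continuousOn.exists_isMinOn'
    (V.map A).closed_of_finiteDimensional (V.map A).zero_mem
    ((hg_coercive.eventually (eventually_ge_atTop _)).filter_mono inf_le_left)
  exact ⟨u, hu, fun v hv => hmin ⟨v, hv, rfl⟩⟩

lemma exists_forall_add_le_of_finite_cover {M σ : Type*} [Finite σ] [Nonempty M]
    (f pen : M → ℝ) (V : σ → Set M) (c : σ → ℝ)
    (hf : ∀ s, ∃ u ∈ V s, ∀ v ∈ V s, f u ≤ f v) (hpen : ∀ s, ∀ u ∈ V s, pen u ≤ c s)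
    (hcover : ∀ u, ∃ s, u ∈ V s ∧ c s ≤ pen u) :
    ∃ u, ∀ v, f u + pen u ≤ f v + pen v := by
  choose U hUV hUmin using hf
  have : Nonempty σ := (hcover (Classical.arbitrary M)).nonempty
  obtain ⟨s₀, hs₀⟩ := Finite.exists_min fun s => f (U s) + c s
  refine ⟨U s₀, fun v => ?_⟩
  obtain ⟨s, hvs, hcs⟩ := hcover v
  calc f (U s₀) + pen (U s₀) ≤ f (U s₀) + c s₀ := by gcongr; exact hpen s₀ _ (hUV s₀)
    _ ≤ f (U s) + c s := hs₀ s
    _ ≤ f v + pen v := add_le_add (hUmin s v hvs) hcs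

lemma l0_eq_card_filter {n d : ℕ} (u : Fin n → Fin d → ℝ) :
    l0 u = #(univ.filter fun i => u i ≠ 0) := by
  rw [l0, ← Set.ncard_coe_finset, coe_filter]
  simp only [mem_univ, true_and]

lemma l0_le_card_of_mem_pi {n d : ℕ} {u : Fin n → Fin d → ℝ} {S : Finset (Fin n)}
    (hu : u ∈ Submodule.pi (↑S)ᶜ fun _ => (⊥ : Submodule ℝ (Fin d → ℝ))) : l0 u ≤ #S := by
  rw [l0_eq_card_filter]
  refine Nat.cast_le.mpr (card_le_card fun i hi => ?_)
  by_contra hiS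
  exact (mem_filter.mp hi).2 ((Submodule.mem_bot ℝ).mp (hu i hiS))

lemma mem_pi_filter_ne_zero {n d : ℕ} (u : Fin n → Fin d → ℝ) :
    u ∈ Submodule.pi (↑(univ.filter fun i => u i ≠ 0))ᶜ fun _ => (⊥ : Submodule ℝ (Fin d → ℝ)) :=
  fun i hi => (Submodule.mem_bot ℝ).mpr (by simpa using hi)

/-- E attains a global minimum. -/
theorem stmt5 {ng d m : ℕ}
    (A : (Fin ng → Fin d → ℝ) →ₗ[ℝ] (Fin m → ℝ)) (b : Fin m → ℝ)
    (D1 D2 : (Fin ng → Fin d → ℝ) →ₗ[ℝ] (Fin ng → Fin d → ℝ))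
    (p lam : ℝ) (hp : 1 ≤ p) (hlam : 0 < lam) :
    ∃ uh : Fin ng → Fin d → ℝ, ∀ u, pottsE A b D1 D2 p lam uh ≤ pottsE A b D1 D2 p lam u := by
  have hp₀ : 0 < p := by linarith
  let V (s : Finset (Fin ng) × Finset (Fin ng)) : Submodule ℝ (Fin ng → Fin d → ℝ) :=
    (Submodule.pi (↑s.1)ᶜ fun _ => ⊥).comap D1 ⊓ (Submodule.pi (↑s.2)ᶜ fun _ => ⊥).comap D2
  refine exists_forall_add_le_of_finite_cover _ _ (fun s => V s)
    (fun s => lam * (#s.1 + #s.2)) (fun s => ?fidelity) (fun s u hu => ?penalty) (fun u => ?cover)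
  case fidelity =>
    refine (V s).exists_mem_forall_le_comp A (g := fun z => 1 / p * ∑ i, |z i - b i| ^ p) ?_
      ((tendsto_sum_abs_sub_rpow_cocompact b hp₀).const_mul_atTop (by positivity))
    exact continuous_const.mul (continuous_finsetSum _ fun i _ =>
      ((continuous_apply i).sub continuous_const).abs.rpow_const fun _ => .inr hp₀.le)
  case penalty =>
    exact mul_le_mul_of_nonneg_left
      (add_le_add (l0_le_card_of_mem_pi hu.1) (l0_le_card_of_mem_pi hu.2)) hlam.le
  case cover =>
    refine ⟨(univ.filter fun i => D1 u i ≠ 0, univ.filter fun i => D2 u i ≠ 0),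
      ⟨mem_pi_filter_ne_zero (D1 u), mem_pi_filter_ne_zero (D2 u)⟩, ?_⟩
    rw [l0_eq_card_filter (D1 u), l0_eq_card_filter (D2 u)]
end

section
/- Suppose a real sequence a_k ≥ 0 satisfies a_{k+1} ≤ C/(2η^{(k)}) · a_{k+1} + C/(2η^{(k)}) + (1/2)b_k + a_k for all k, where η^{(k)} = η^{(0)}σ^k → ∞ and b_k decays exponentially. Then there exist constants C' > 0 and τ with 1 < τ ≤ √σ such that a_k ≤ C'τ^k for all k. -/
/-!
Write `ε k = C / (2 η k)`, which tends to `0` because `η k` grows geometrically. Once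
`ε k ≤ 1 - 1/τ`, the recursion `(1 - ε k) a (k+1) ≤ a k + ε k + b k / 2` gives
`a (k+1) ≤ τ (a k + D)` with a constant `D`, i.e. `a k + E` grows at most by the factor `τ`
per step, where `E = τ D / (τ - 1)`. This holds for every `τ > 1`; we take `τ = √σ`.
-/

open Filter Topology

lemma le_mul_of_one_sub_mul_le {x y ε τ : ℝ} (hx : 0 ≤ x) (hτ : 0 < τ) (hε : ε ≤ 1 - τ⁻¹)
    (h : (1 - ε) * x ≤ y) : x ≤ τ * y := by
  have hτx : x ≤ τ * ((1 - ε) * x) := by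
    have : τ⁻¹ * x ≤ (1 - ε) * x := mul_le_mul_of_nonneg_right (by linarith) hx
    calc x = τ * (τ⁻¹ * x) := by field_simp
      _ ≤ τ * ((1 - ε) * x) := by gcongr
  exact hτx.trans (by gcongr)

lemma eventually_le_mul_add_of_le_mul_add_self {a ε β : ℕ → ℝ} {τ B : ℝ}
    (ha : ∀ k, 0 ≤ a k) (hε : Tendsto ε atTop (𝓝 0)) (hτ : 1 < τ) (hβ : ∀ k, β k ≤ B)
    (h : ∀ k, a (k + 1) ≤ ε k * a (k + 1) + ε k + β k + a k) :
    ∀ᶠ k in atTop, a (k + 1) ≤ τ * (a k + (1 + B)) := by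
  have hτ₀ : 0 < τ := by linarith
  have hgap : (0 : ℝ) < 1 - τ⁻¹ := sub_pos.2 (inv_lt_one_of_one_lt₀ hτ)
  filter_upwards [hε.eventually_lt_const hgap] with k hk
  have hε1 : ε k ≤ 1 := by linarith [inv_pos.2 hτ₀]
  refine le_mul_of_one_sub_mul_le (ha _) hτ₀ hk.le ?_
  linarith [h k, hβ k]

lemma eventually_le_mul_pow_of_le_mul_add {a : ℕ → ℝ} {τ D : ℝ} (hτ : 1 < τ) (hD : 0 ≤ D)
    (h : ∀ᶠ k in atTop, a (k + 1) ≤ τ * (a k + D)) :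
    ∃ M, ∀ᶠ k in atTop, a k ≤ M * τ ^ k := by
  obtain ⟨K, hK⟩ := eventually_atTop.1 h
  have hτ₀ : 0 < τ := by linarith
  set E := τ * D / (τ - 1)
  have hE : 0 ≤ E := div_nonneg (by positivity) (by linarith)
  have hEτ : E * (τ - 1) = τ * D := div_mul_cancel₀ _ (by linarith)
  have hshift : ∀ k ≥ K, a (k + 1) + E ≤ τ * (a k + E) := by
    intro k hk
    linarith [hK k hk]
  refine ⟨(a K + E) / τ ^ K, eventually_atTop.2 ⟨K, fun k hk => ?_⟩⟩
  have hgrowth : a k + E ≤ (a K + E) / τ ^ K * τ ^ k := by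
    induction k, hk using Nat.le_induction with
    | base => rw [div_mul_cancel₀ _ (pow_ne_zero K hτ₀.ne')]
    | succ k hk ih =>
      calc a (k + 1) + E ≤ τ * (a k + E) := hshift k hk
        _ ≤ τ * ((a K + E) / τ ^ K * τ ^ k) := by gcongr
        _ = (a K + E) / τ ^ K * τ ^ (k + 1) := by ring
  linarith

lemma exists_pos_forall_le_mul_pow_of_eventually {a : ℕ → ℝ} {τ M : ℝ} (hτ : 0 < τ)
    (h : ∀ᶠ k in atTop, a k ≤ M * τ ^ k) : ∃ C', 0 < C' ∧ ∀ k, a k ≤ C' * τ ^ k := by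
  have hbdd : BddAbove (Set.range fun k => a k / τ ^ k) := by
    refine IsBoundedUnder.bddAbove_range ⟨M, eventually_map.2 ?_⟩
    filter_upwards [h] with k hk
    exact (div_le_iff₀ (pow_pos hτ k)).2 hk
  obtain ⟨N, hN⟩ := hbdd
  refine ⟨max N 1, by positivity, fun k => ?_⟩
  have : a k / τ ^ k ≤ max N 1 := (hN ⟨k, rfl⟩).trans (le_max_left _ _)
  exact (div_le_iff₀ (pow_pos hτ k)).1 this

lemma tendsto_div_mul_pow_nhds_zero (c η₀ : ℝ) {σ : ℝ} (hσ : 1 < σ) :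
    Tendsto (fun k : ℕ => c / (η₀ * σ ^ k)) atTop (𝓝 0) := by
  have hlim := (tendsto_pow_atTop_nhds_zero_of_lt_one (inv_nonneg.2 (by linarith : (0 : ℝ) ≤ σ))
    (inv_lt_one_of_one_lt₀ hσ)).const_mul (c / η₀)
  rw [mul_zero] at hlim
  refine hlim.congr fun k => ?_
  rw [inv_pow, div_mul_eq_div_div, div_eq_mul_inv (c / η₀)]

theorem stmt15_general (a b : ℕ → ℝ) (C η₀ σ : ℝ) (η : ℕ → ℝ)
    (ha : ∀ k, 0 ≤ a k) (hσ : 1 < σ)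
    (hη : ∀ k, η k = η₀ * σ ^ k)
    (hb : ∃ B r : ℝ, 0 < B ∧ 0 < r ∧ r < 1 ∧ ∀ k, b k ≤ B * r ^ k)
    (hrec : ∀ k, a (k + 1) ≤ C / (2 * η k) * a (k + 1) + C / (2 * η k) + b k / 2 + a k) :
    ∃ C' τ : ℝ, 0 < C' ∧ 1 < τ ∧ τ ≤ Real.sqrt σ ∧ ∀ k, a k ≤ C' * τ ^ k := by
  obtain ⟨B, r, hB, hr₀, hr₁, hbB⟩ := hb
  have hτ : 1 < Real.sqrt σ := Real.lt_sqrt_of_sq_lt (by linarith)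
  have hε : Tendsto (fun k => C / (2 * η k)) atTop (𝓝 0) := by
    simpa only [hη, mul_assoc] using tendsto_div_mul_pow_nhds_zero C (2 * η₀) hσ
  have hβ (k : ℕ) : b k / 2 ≤ B / 2 := by
    have : B * r ^ k ≤ B := mul_le_of_le_one_right hB.le (pow_le_one₀ hr₀.le hr₁.le)
    linarith [hbB k]
  obtain ⟨M, hM⟩ := eventually_le_mul_pow_of_le_mul_add hτ (by positivity)
    (eventually_le_mul_add_of_le_mul_add_self ha hε hτ hβ hrec)
  obtain ⟨C', hC', hle⟩ := exists_pos_forall_le_mul_pow_of_eventually (by linarith) hM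
  exact ⟨C', Real.sqrt σ, hC', hτ, le_rfl, hle⟩

/-- Abstract growth-estimate lemma used to bound ‖u^{(k)}‖₂ in the ADMM convergence proof. -/
theorem stmt15 (a b : ℕ → ℝ) (C η₀ σ : ℝ) (η : ℕ → ℝ)
    (ha : ∀ k, 0 ≤ a k) (hC : 0 < C) (hη₀ : 0 < η₀) (hσ : 1 < σ)
    (hη : ∀ k, η k = η₀ * σ ^ k)
    (hb : ∃ B r : ℝ, 0 < B ∧ 0 < r ∧ r < 1 ∧ ∀ k, b k ≤ B * r ^ k)
    (hrec : ∀ k, a (k + 1) ≤ C / (2 * η k) * a (k + 1) + C / (2 * η k) + b k / 2 + a k) :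
    ∃ C' τ : ℝ, 0 < C' ∧ 1 < τ ∧ τ ≤ Real.sqrt σ ∧ ∀ k, a k ≤ C' * τ ^ k :=
  stmt15_general a b C η₀ σ η ha hσ hη hb hrec
end
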